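/- Let N = 3^k with k ≥ 1, let W_N be the Walsh–Fourier matrix, and let D be the N×N block-diagonal matrix diag(W_{N/3}, 0, W_{N/3}) (with three blocks of size N/3; for k = 1 the blocks W_1 are the 1×1 identity). Then for all 0 ≤ j, j′ ≤ N−1, (W_N*·D)_{j,j′} = (T_k)_{ε(j),ε(j′)}, where ε(j) = (ε₀(j),…,ε_{k−1}(j)) is the word of ternary digits of j. In other words, the Walsh quantization W_N^{−1}·diag(W_{N/3},0,W_{N/3}) of the open baker's map coincides, under the ternary-digit identification ℂ^{3^k} ≅ (ℂ³)^{⊗k}, with the shift-type operator T_k. -/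

import Mathlib

open Matrix

/-- The `ℓ`-th ternary digit of `j` in the expansion `j = Σ_{ℓ=0}^{k-1} ε_ℓ(j)·3^{k-1-ℓ}`. -/
def tdigit (k ℓ j : ℕ) : ℕ := j / 3 ^ (k - 1 - ℓ) % 3

/-- The word `ε(j) = (ε₀(j),…,ε_{k−1}(j))` of ternary digits of `j`. -/
def tword (k j : ℕ) : Fin k → Fin 3 :=
  fun ℓ => ⟨tdigit k ℓ j, Nat.mod_lt _ (by norm_num)⟩

/-- The Walsh–Fourier matrix `W_N`, `N = 3^k`, with entries
`(W_N)_{j,j'} = 3^{−k/2}·exp(−(2πi/3)·Σ_{ℓ+ℓ'=k−1} ε_ℓ(j)·ε_{ℓ'}(j'))`. -/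
noncomputable def Walsh (k : ℕ) : Matrix (Fin (3 ^ k)) (Fin (3 ^ k)) ℂ :=
  Matrix.of fun j j' : Fin (3 ^ k) =>
    (((Real.sqrt 3 : ℝ) : ℂ)⁻¹) ^ k *
      Complex.exp (-(2 * Real.pi * Complex.I / 3) *
        ((∑ ℓ ∈ Finset.range k, tdigit k ℓ (j : ℕ) * tdigit k (k - 1 - ℓ) (j' : ℕ) : ℕ) : ℂ))

/-- The block-diagonal matrix `D = diag(W_{N/3}, 0, W_{N/3})` of size `N = 3^{k+1}`. -/
noncomputable def WalshBlock (k : ℕ) : Matrix (Fin (3 ^ (k + 1))) (Fin (3 ^ (k + 1))) ℂ :=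
  Matrix.of fun j j' : Fin (3 ^ (k + 1)) =>
    if h : (j : ℕ) < 3 ^ k ∧ (j' : ℕ) < 3 ^ k then
      Walsh k ⟨(j : ℕ), h.1⟩ ⟨(j' : ℕ), h.2⟩
    else if h' : 2 * 3 ^ k ≤ (j : ℕ) ∧ 2 * 3 ^ k ≤ (j' : ℕ) then
      Walsh k ⟨(j : ℕ) - 2 * 3 ^ k, by have h1 := j.isLt; have h2 : (3:ℕ) ^ (k+1) = 3 ^ k * 3 := pow_succ 3 k; omega⟩
              ⟨(j' : ℕ) - 2 * 3 ^ k, by have h1 := j'.isLt; have h2 : (3:ℕ) ^ (k+1) = 3 ^ k * 3 := pow_succ 3 k; omega⟩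
    else 0

/-- The 3×3 matrix `M` with entries `M_{a,b} = 3^{-1/2}·exp(2πi·a·b/3)` for
`b ∈ {0,2}` and `M_{a,1} = 0`. -/
noncomputable def Mbaker : Matrix (Fin 3) (Fin 3) ℂ :=
  Matrix.of fun a b : Fin 3 =>
    if b = 1 then 0
    else ((Real.sqrt 3 : ℝ) : ℂ)⁻¹ *
      Complex.exp (2 * Real.pi * Complex.I * (a : ℕ) * (b : ℕ) / 3)

/-- The Walsh-quantized open baker's matrix `T_k` of size `3^k`, indexed by words
`ε ∈ {0,1,2}^k`: `(T_k)_{ε',ε} = M_{ε'_{k-1}, ε_0}` if `ε'_i = ε_{i+1}` for all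
`0 ≤ i ≤ k-2`, and `0` otherwise. -/
noncomputable def Tbaker : (k : ℕ) → Matrix (Fin k → Fin 3) (Fin k → Fin 3) ℂ
  | 0 => 0
  | (k + 1) => Matrix.of fun ε' ε =>
      if ∀ i : Fin k, ε' i.castSucc = ε i.succ then Mbaker (ε' (Fin.last k)) (ε 0) else 0

/-! Under the ternary-digit identification `Fin (3 ^ k) ≃ (Fin k → Fin 3)`, with digits
multiplied in `ℤ/3`, the phase of `W_N` is `ε ⬝ᵥ (η ∘ rev)`. Splitting off the first digit `a`
of the row word gives `W_{3N}(a :: μ, η) = 3^{-1/2} ψ(-a·η_last) W_N(μ, init η)`, while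
`diag(W_N, 0, W_N)` only keeps `a = ε₀ ∈ {0, 2}` and acts by `W_N` on the tails. Hence
`(W_{3N}* D)(ε', ε) = M(ε'_last, ε₀) · (W_N* W_N)(init ε', tail ε)`, and unitarity of `W_N`
(orthogonality of the characters of `(ℤ/3)^k`) turns the last factor into the shift condition
`init ε' = tail ε`. -/

open Fin.CommRing

lemma AddChar.map_sum_eq_prod {ι A M : Type*} [AddCommMonoid A] [CommMonoid M] (ψ : AddChar A M)
    (s : Finset ι) (f : ι → A) : ψ (∑ i ∈ s, f i) = ∏ i ∈ s, ψ (f i) := by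
  have h := map_prod ψ.toMonoidHom (fun i => Multiplicative.ofAdd (f i)) s
  rwa [← ofAdd_sum, AddChar.toMonoidHom_apply] at h

noncomputable def ψ₃ : AddChar (Fin 3) ℂ :=
  ZMod.stdAddChar.compAddMonoidHom (ZMod.finEquiv 3).toAddMonoidHom

lemma ψ₃_intCast (n : ℤ) : ψ₃ n = Complex.exp (2 * Real.pi * Complex.I * n / 3) := by
  change ZMod.stdAddChar (ZMod.finEquiv 3 n) = _
  rw [map_intCast, ZMod.stdAddChar_coe]
  norm_num

lemma sum_ψ₃_mul (b : Fin 3) : ∑ x, ψ₃ (x * b) = if b = 0 then 3 else 0 := by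
  have h := AddChar.sum_mulShift (ZMod.finEquiv 3 b) (ZMod.isPrimitive_stdAddChar 3)
  rw [← (ZMod.finEquiv 3).toEquiv.sum_comp] at h
  simpa [ψ₃, ← map_mul] using h

lemma sum_ψ₃_dotProduct {ι : Type*} [Fintype ι] [DecidableEq ι] (d : ι → Fin 3) :
    ∑ μ : ι → Fin 3, ψ₃ (μ ⬝ᵥ d) = if d = 0 then 3 ^ Fintype.card ι else 0 := by
  calc ∑ μ : ι → Fin 3, ψ₃ (μ ⬝ᵥ d) = ∑ μ : ι → Fin 3, ∏ i, ψ₃ (μ i * d i) := by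
        simp only [dotProduct, AddChar.map_sum_eq_prod]
    _ = ∏ i, ∑ x, ψ₃ (x * d i) := (Fintype.prod_sum fun i x => ψ₃ (x * d i)).symm
    _ = if d = 0 then 3 ^ Fintype.card ι else 0 := by
        simp only [sum_ψ₃_mul, Fintype.prod_ite_zero, funext_iff, Pi.zero_apply,
          Finset.prod_const, Finset.card_univ]

lemma star_ψ₃ (x : Fin 3) : star (ψ₃ x) = ψ₃ (-x) := by
  rw [AddChar.map_neg_eq_conj]
  rfl

lemma tword_eq_finFunctionFinEquiv_symm {k : ℕ} (j : Fin (3 ^ k)) :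
    tword k j = finFunctionFinEquiv.symm j ∘ Fin.rev := by
  ext ℓ
  simp only [tword, tdigit, Function.comp_apply, finFunctionFinEquiv_symm_apply_val, Fin.val_rev,
    Nat.sub_sub, add_comm 1]

def twordEquiv (k : ℕ) : Fin (3 ^ k) ≃ (Fin k → Fin 3) :=
  finFunctionFinEquiv.symm.trans (Equiv.arrowCongr Fin.revPerm (Equiv.refl _))

@[simp] lemma twordEquiv_apply {k : ℕ} (j : Fin (3 ^ k)) : twordEquiv k j = tword k j := by
  rw [tword_eq_finFunctionFinEquiv_symm]
  ext ℓ
  simp [twordEquiv, Equiv.arrowCongr_apply]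

lemma tword_succ_zero_val {k j : ℕ} (hj : j < 3 ^ (k + 1)) :
    (tword (k + 1) j 0 : ℕ) = j / 3 ^ k := by
  simp only [tword, tdigit, Fin.val_zero, Nat.add_sub_cancel, Nat.sub_zero]
  exact Nat.mod_eq_of_lt (Nat.div_lt_of_lt_mul (by rwa [← pow_succ]))

lemma tail_tword_succ (k j : ℕ) : Fin.tail (tword (k + 1) j) = tword k (j % 3 ^ k) := by
  ext ℓ
  have hℓ := ℓ.isLt
  simp only [Fin.tail, tword, tdigit, Fin.val_succ]
  rw [show k + 1 - 1 - (ℓ + 1) = k - 1 - ℓ by omega]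
  set e := k - 1 - (ℓ : ℕ)
  rw [show 3 ^ k = 3 ^ e * 3 ^ (k - e) by rw [← pow_add]; congr 1; omega,
    Nat.mod_mul_right_div_self, Nat.mod_mod_of_dvd _ (dvd_pow_self 3 (by omega))]

lemma tword_succ_zero_eq_zero_iff {k : ℕ} (j : Fin (3 ^ (k + 1))) :
    tword (k + 1) j 0 = 0 ↔ (j : ℕ) < 3 ^ k := by
  rw [Fin.ext_iff, tword_succ_zero_val j.isLt, Fin.val_zero, Nat.div_eq_zero_iff_lt (by positivity)]

lemma tword_succ_zero_eq_two_iff {k : ℕ} (j : Fin (3 ^ (k + 1))) :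
    tword (k + 1) j 0 = 2 ↔ 2 * 3 ^ k ≤ (j : ℕ) := by
  have hlt : (j : ℕ) / 3 ^ k < 3 := Nat.div_lt_of_lt_mul (by rw [← pow_succ]; exact j.isLt)
  rw [Fin.ext_iff, tword_succ_zero_val j.isLt, (Nat.le_div_iff_mul_le (by positivity)).symm]
  simp only [Fin.isValue, Fin.val_two]
  omega

lemma tword_apply_eq_natCast (k j : ℕ) (ℓ : Fin k) : tword k j ℓ = (tdigit k ℓ j : Fin 3) :=
  (Fin.cast_val_eq_self _).symm

noncomputable def walshWords (k : ℕ) : Matrix (Fin k → Fin 3) (Fin k → Fin 3) ℂ :=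
  of fun ε η => ((√3 : ℝ) : ℂ)⁻¹ ^ k * ψ₃ (-(ε ⬝ᵥ (η ∘ Fin.rev)))

lemma Walsh_apply (k : ℕ) (j j' : Fin (3 ^ k)) :
    Walsh k j j' = walshWords k (tword k j) (tword k j') := by
  have hdot : tword k j ⬝ᵥ (tword k j' ∘ Fin.rev) =
      ((∑ ℓ ∈ Finset.range k, tdigit k ℓ j * tdigit k (k - 1 - ℓ) j' : ℕ) : Fin 3) := by
    simp only [dotProduct, Function.comp_apply, tword_apply_eq_natCast, Fin.val_rev, Nat.cast_sum,
      Nat.cast_mul, Nat.sub_sub, Nat.add_comm 1]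
    exact Fin.sum_univ_eq_sum_range
      (fun ℓ => (tdigit k ℓ j : Fin 3) * (tdigit k (k - (ℓ + 1)) j' : Fin 3)) k
  simp only [Walsh, walshWords, of_apply, hdot]
  generalize ∑ ℓ ∈ Finset.range k, tdigit k ℓ j * tdigit k (k - 1 - ℓ) j' = n
  rw [show -(n : Fin 3) = ((-n : ℤ) : Fin 3) by push_cast; rfl, ψ₃_intCast]
  push_cast
  ring_nf

noncomputable def walshBlockWords (k : ℕ) : Matrix (Fin (k + 1) → Fin 3) (Fin (k + 1) → Fin 3) ℂ :=
  of fun ε η => if ε 0 = η 0 ∧ η 0 ≠ 1 then walshWords k (Fin.tail ε) (Fin.tail η) else 0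

lemma WalshBlock_apply (k : ℕ) (m j : Fin (3 ^ (k + 1))) :
    WalshBlock k m j = walshBlockWords k (tword (k + 1) m) (tword (k + 1) j) := by
  simp only [WalshBlock, walshBlockWords, of_apply]
  by_cases hlow : (m : ℕ) < 3 ^ k ∧ (j : ℕ) < 3 ^ k
  · rw [dif_pos hlow, if_pos, Walsh_apply, tail_tword_succ, tail_tword_succ,
      Nat.mod_eq_of_lt hlow.1, Nat.mod_eq_of_lt hlow.2]
    simp [(tword_succ_zero_eq_zero_iff _).2, hlow]
  by_cases hhigh : 2 * 3 ^ k ≤ (m : ℕ) ∧ 2 * 3 ^ k ≤ (j : ℕ)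
  · have hsub (x : Fin (3 ^ (k + 1))) (hx : 2 * 3 ^ k ≤ (x : ℕ)) :
        (x : ℕ) - 2 * 3 ^ k = x % 3 ^ k := by
      have hx3 : (x : ℕ) < 3 ^ k * 3 := pow_succ 3 k ▸ x.isLt
      rw [← Nat.sub_mul_mod (show 3 ^ k * 2 ≤ (x : ℕ) by omega), Nat.mod_eq_of_lt (by omega),
        mul_comm]
    rw [dif_neg hlow, dif_pos hhigh, if_pos]
    · simp only [Walsh_apply, tail_tword_succ, hsub m hhigh.1, hsub j hhigh.2]
    simp [(tword_succ_zero_eq_two_iff _).2, hhigh]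
  · rw [dif_neg hlow, dif_neg hhigh, if_neg]
    rintro ⟨hmj, hj1⟩
    rcases (by decide : ∀ d : Fin 3, d ≠ 1 → d = 0 ∨ d = 2) _ hj1 with h | h
    · exact hlow ⟨(tword_succ_zero_eq_zero_iff m).1 (hmj.trans h),
        (tword_succ_zero_eq_zero_iff j).1 h⟩
    · exact hhigh ⟨(tword_succ_zero_eq_two_iff m).1 (hmj.trans h),
        (tword_succ_zero_eq_two_iff j).1 h⟩

lemma Mbaker_apply (a b : Fin 3) :
    Mbaker a b = if b = 1 then 0 else ((√3 : ℝ) : ℂ)⁻¹ * ψ₃ (a * b) := by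
  have hab : a * b = (((a * b : ℕ) : ℤ) : Fin 3) := by
    rw [Int.cast_natCast, Nat.cast_mul, Fin.cast_val_eq_self, Fin.cast_val_eq_self]
  rw [Mbaker, of_apply, hab, ψ₃_intCast]
  push_cast
  ring_nf

lemma walshWords_cons (k : ℕ) (a : Fin 3) (μ : Fin k → Fin 3) (η : Fin (k + 1) → Fin 3) :
    walshWords (k + 1) (Fin.cons a μ) η =
      ((√3 : ℝ) : ℂ)⁻¹ * ψ₃ (-(a * η (Fin.last k))) * walshWords k μ (Fin.init η) := by
  simp only [walshWords, of_apply, dotProduct, Fin.sum_univ_succ, Fin.cons_zero, Fin.cons_succ,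
    Function.comp_apply, Fin.rev_zero, Fin.rev_succ, Fin.init, neg_add, AddChar.map_add_eq_mul,
    pow_succ]
  ring

lemma conjTranspose_walshWords_mul_self (k : ℕ) : (walshWords k)ᴴ * walshWords k = 1 := by
  ext η η'
  have hscale : (((√3 : ℝ) : ℂ) ^ k)⁻¹ * (((√3 : ℝ) : ℂ) ^ k)⁻¹ * 3 ^ k = 1 := by
    have h3 : ((√3 : ℝ) : ℂ) ^ 2 = 3 := by
      rw [← Complex.ofReal_pow, Real.sq_sqrt (by norm_num)]
      norm_num
    rw [← mul_inv, ← mul_pow, ← sq, h3, inv_mul_cancel₀ (pow_ne_zero _ three_ne_zero)]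
  have hrev : η ∘ Fin.rev - η' ∘ Fin.rev = 0 ↔ η = η' := by
    rw [sub_eq_zero]
    exact (Fin.rev_surjective.injective_comp_right).eq_iff
  simp only [mul_apply, one_apply, conjTranspose_apply, walshWords, of_apply, star_mul', star_pow,
    star_ψ₃, neg_neg, mul_mul_mul_comm _ (ψ₃ _), ← AddChar.map_add_eq_mul, ← sub_eq_add_neg,
    ← dotProduct_sub, ← Finset.mul_sum, sum_ψ₃_dotProduct, hrev, Fintype.card_fin]
  split_ifs <;> simp [hscale]

lemma conjTranspose_walshWords_mul_walshBlockWords (k : ℕ) :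
    (walshWords (k + 1))ᴴ * walshBlockWords k = Tbaker (k + 1) := by
  ext ε' ε
  calc ((walshWords (k + 1))ᴴ * walshBlockWords k) ε' ε
      = ∑ a : Fin 3, ∑ μ : Fin k → Fin 3,
          star (walshWords (k + 1) (Fin.cons a μ) ε') * walshBlockWords k (Fin.cons a μ) ε := by
        rw [mul_apply, ← (Fin.consEquiv fun _ => Fin 3).sum_comp, Fintype.sum_prod_type]
        rfl
    _ = ∑ a : Fin 3,
          (if a = ε 0 ∧ ε 0 ≠ 1 then ((√3 : ℝ) : ℂ)⁻¹ * ψ₃ (a * ε' (Fin.last k)) else 0) *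
            ((walshWords k)ᴴ * walshWords k) (Fin.init ε') (Fin.tail ε) := by
        simp only [walshWords_cons, walshBlockWords, of_apply, Fin.cons_zero, Fin.tail_cons,
          mul_apply, Finset.mul_sum, conjTranspose_apply]
        refine Finset.sum_congr rfl fun a _ => Finset.sum_congr rfl fun μ _ => ?_
        split_ifs
        · simp only [star_mul', star_ψ₃, neg_neg, Complex.star_def, map_inv₀, Complex.conj_ofReal]
          ring
        · simp only [mul_zero, zero_mul]
    _ = Tbaker (k + 1) ε' ε := by
        rw [conjTranspose_walshWords_mul_self, one_apply,
          Fintype.sum_eq_single (ε 0) fun a ha => by rw [if_neg fun h => ha h.1, zero_mul]]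
        simp only [Tbaker, of_apply, Mbaker_apply, funext_iff, Fin.init, Fin.tail, true_and, ne_eq]
        split_ifs <;> simp [mul_comm]

theorem stmt_9 (k : ℕ) (j j' : Fin (3 ^ (k + 1))) :
    ((Walsh (k + 1))ᴴ * WalshBlock k) j j' =
      Tbaker (k + 1) (tword (k + 1) (j : ℕ)) (tword (k + 1) (j' : ℕ)) := by
  have hW : Walsh (k + 1) = (walshWords (k + 1)).submatrix (twordEquiv _) (twordEquiv _) := by
    ext; simp [Walsh_apply]
  have hD : WalshBlock k = (walshBlockWords k).submatrix (twordEquiv _) (twordEquiv _) := by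
    ext; simp [WalshBlock_apply]
  rw [hW, hD, conjTranspose_submatrix, submatrix_mul_equiv,
    conjTranspose_walshWords_mul_walshBlockWords, submatrix_apply, twordEquiv_apply,
    twordEquiv_apply]
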